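/- arXiv:1912.08959 — 5 statements merged into one kernel-verified Lean document; each statement's English description precedes it below -/
import Mathlib

section
/- Let w : ℤ → ℂ satisfy w(n+1)·w(n)·w(n-1) = 1 for all n, with w(n) ≠ 0 for all n. Define K(x,y) = (x²y² + x + y)/(xy). Then K(w(n+1), w(n)) = K(w(n), w(n-1)) for all n. -/
/-! On the level set `x y z = 1` we have `1 / x = y z` and `1 / y = z x`, so
`K(x, y) = x y + 1 / y + 1 / x = x y + y z + z x` is the symmetric function `e₂(x, y, z)`.
A step of the recurrence replaces `(x, y, z)` by a cyclic rotation, which leaves `e₂` unchanged. -/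

theorem div_eq_add_add_of_mul_mul_eq_one {F : Type*} [Field F] {x y z : F}
    (h : x * y * z = 1) :
    (x ^ 2 * y ^ 2 + x + y) / (x * y) = x * y + y * z + z * x := by
  have hxy : x * y ≠ 0 := left_ne_zero_of_mul_eq_one h
  rw [div_eq_iff hxy]
  linear_combination -(x + y) * h

theorem stmt0_general (w : ℤ → ℂ)
    (h : ∀ n : ℤ, w (n + 1) * w n * w (n - 1) = 1)
    (K : ℂ → ℂ → ℂ)
    (hK : ∀ x y, K x y = (x ^ 2 * y ^ 2 + x + y) / (x * y)) :
    ∀ n : ℤ, K (w (n + 1)) (w n) = K (w n) (w (n - 1)) := by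
  intro n
  have hrot : w n * w (n - 1) * w (n + 1) = 1 := by linear_combination h n
  rw [hK, hK, div_eq_add_add_of_mul_mul_eq_one (h n), div_eq_add_add_of_mul_mul_eq_one hrot]
  ring

/-- Invariant of the autonomous q-Painlevé I recurrence w(n+1)·w(n)·w(n-1) = 1. -/
theorem stmt0 (w : ℤ → ℂ) (hne : ∀ n, w n ≠ 0)
    (h : ∀ n : ℤ, w (n + 1) * w n * w (n - 1) = 1)
    (K : ℂ → ℂ → ℂ)
    (hK : ∀ x y, K x y = (x ^ 2 * y ^ 2 + x + y) / (x * y)) :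
    ∀ n : ℤ, K (w (n + 1)) (w n) = K (w n) (w (n - 1)) :=
  stmt0_general w h K hK
end

section
/- Let w : ℤ → ℂ be a nonvanishing sequence satisfying w(n+1)·w(n-1) = 1/w(n) − 1/(z·w(n)²) where z = a·qⁿ (a, q ≠ 0), and suppose w(n) ≠ 1/z. Define K(x,y) = (x²y² + x + y)/(xy). Then K(w(n+1), w(n)) − K(w(n), w(n-1)) = −(1/z)·w(n)·(w(n+1) − w(n-1))/(w(n) − 1/z). -/
/-!
Writing `K(x, y) = x y + 1/x + 1/y`, the difference `K(u, v) - K(v, x)` factors as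
`(u - x) (v - 1/(u x))`. The equation gives `1/(u x) = v² / (v - 1/z)`, and then
`v - v² / (v - 1/z) = -(1/z) v / (v - 1/z)`.
-/

section

variable {F : Type*} [Field F]

def autonomousInvariant (x y : F) : F := (x ^ 2 * y ^ 2 + x + y) / (x * y)

theorem autonomousInvariant_sub_autonomousInvariant {u v x : F}
    (hu : u ≠ 0) (hv : v ≠ 0) (hx : x ≠ 0) :
    autonomousInvariant u v - autonomousInvariant v x = (u - x) * (v - (u * x)⁻¹) := by
  unfold autonomousInvariant
  field_simp
  ring

theorem autonomousInvariant_sub_autonomousInvariant_of_step {u v x c : F}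
    (hv : v ≠ 0) (hvc : v ≠ c) (hstep : u * x = 1 / v - c / v ^ 2) :
    autonomousInvariant u v - autonomousInvariant v x = -c * v * (u - x) / (v - c) := by
  have hvc' : v - c ≠ 0 := sub_ne_zero.mpr hvc
  have hux : u * x = (v - c) / v ^ 2 := by
    rw [hstep]
    field_simp
  have hux0 : u * x ≠ 0 := hux ▸ div_ne_zero hvc' (pow_ne_zero 2 hv)
  rw [autonomousInvariant_sub_autonomousInvariant (left_ne_zero_of_mul hux0) hv
    (right_ne_zero_of_mul hux0), hux, inv_div]
  field_simp
  ring

end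

theorem stmt1_general (a q : ℂ) (w : ℤ → ℂ)
    (hne : ∀ n, w n ≠ 0)
    (heq : ∀ n : ℤ, w (n + 1) * w (n - 1) =
      1 / w n - 1 / (a * q ^ n * (w n) ^ 2))
    (hne2 : ∀ n : ℤ, w n ≠ 1 / (a * q ^ n))
    (K : ℂ → ℂ → ℂ)
    (hK : ∀ x y, K x y = (x ^ 2 * y ^ 2 + x + y) / (x * y)) :
    ∀ n : ℤ, K (w (n + 1)) (w n) - K (w n) (w (n - 1)) =
      -(1 / (a * q ^ n)) * w n * (w (n + 1) - w (n - 1)) /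
        (w n - 1 / (a * q ^ n)) := by
  obtain rfl : K = autonomousInvariant := funext fun x => funext (hK x)
  intro n
  exact autonomousInvariant_sub_autonomousInvariant_of_step (hne n) (hne2 n)
    (by rw [heq n, div_div])

/-- Variation of the autonomous invariant K along trajectories of q-Painlevé I. -/
theorem stmt1 (a q : ℂ) (ha : a ≠ 0) (hq : q ≠ 0) (w : ℤ → ℂ)
    (hne : ∀ n, w n ≠ 0)
    (heq : ∀ n : ℤ, w (n + 1) * w (n - 1) =
      1 / w n - 1 / (a * q ^ n * (w n) ^ 2))
    (hne2 : ∀ n : ℤ, w n ≠ 1 / (a * q ^ n))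
    (K : ℂ → ℂ → ℂ)
    (hK : ∀ x y, K x y = (x ^ 2 * y ^ 2 + x + y) / (x * y)) :
    ∀ n : ℤ, K (w (n + 1)) (w n) - K (w n) (w (n - 1)) =
      -(1 / (a * q ^ n)) * w n * (w (n + 1) - w (n - 1)) /
        (w n - 1 / (a * q ^ n)) :=
  stmt1_general a q w hne heq hne2 K hK
end

section
/- There is no nonzero polynomial first integral of the first Painlevé equation: there exist no polynomials Q₁, …, Qₙ ∈ ℂ[t, w] (n ≥ 1) such that every solution w of w'' = 6w² + t satisfies (w')ⁿ + Q₁(t,w)(w')ⁿ⁻¹ + ⋯ + Qₙ(t,w) = 0 identically on its domain. -/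
/-!
For every `b ∈ ℂ`, the power series `w(t) = ∑ cₖ tᵏ` with `c₀ = 0`, `c₁ = b` and
`(k+1)(k+2) c_{k+2} = 6 ∑_{i+j=k} cᵢ cⱼ + [k = 1]` solves `w'' = 6w² + t`; by induction
`|cₖ| ≤ max(|b|, 3)ᵏ`, so it converges near `0` and can be differentiated termwise.
Evaluating the relation at `t = 0`, where `w = 0` and `w' = b`, gives
`bⁿ + Q₁(0,0) bⁿ⁻¹ + ⋯ + Qₙ(0,0) = 0` for every `b ∈ ℂ`, which no monic polynomial
satisfies.
-/

open Finset Metric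

section PowerSeries

variable {𝕜 : Type*} [RCLike 𝕜] {a : ℕ → 𝕜} {C R : ℝ}

theorem summable_norm_mul_pow_of_norm_le_geometric (hR : 0 < R)
    (ha : ∀ k, ‖a k‖ ≤ C * R ^ k) {t : 𝕜} (ht : ‖t‖ < R⁻¹) :
    Summable fun k => ‖a k * t ^ k‖ := by
  have hq : ‖t‖ * R < 1 := (lt_mul_inv_iff₀ hR).1 (by rwa [one_mul])
  refine .of_nonneg_of_le (fun _ => norm_nonneg _) (fun k => ?_)
    ((summable_geometric_of_lt_one (by positivity) hq).mul_left C)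
  calc ‖a k * t ^ k‖ = ‖a k‖ * ‖t‖ ^ k := by rw [norm_mul, norm_pow]
    _ ≤ C * R ^ k * ‖t‖ ^ k := by gcongr; exact ha k
    _ = C * (‖t‖ * R) ^ k := by ring

theorem hasDerivAt_tsum_mul_pow (hR : 0 < R) (ha : ∀ k, ‖a k‖ ≤ C * R ^ k) {t : 𝕜}
    (ht : ‖t‖ < R⁻¹) :
    HasDerivAt (fun z => ∑' k, a k * z ^ k) (∑' k, (k + 1) * a (k + 1) * t ^ k) t := by
  obtain ⟨r, htr, hrR⟩ := exists_between ht
  have hr : 0 < r := (norm_nonneg t).trans_lt htr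
  have hq : r * R < 1 := (lt_mul_inv_iff₀ hR).1 (by rwa [one_mul])
  have hC : 0 ≤ C := by simpa using (norm_nonneg _).trans (ha 0)
  have hu : Summable fun n : ℕ => C * R * ((n + 1) * (r * R) ^ n) := by
    have hq' : ‖r * R‖ < 1 := by rw [Real.norm_of_nonneg (by positivity)]; exact hq
    simpa [add_mul] using ((summable_pow_mul_geometric_of_norm_lt_one 1 hq').add
      (summable_geometric_of_norm_lt_one hq')).mul_left (C * R)
  have hbound : ∀ n (y : 𝕜), y ∈ ball 0 r →
      ‖a (n + 1) * ((n + 1 : ℕ) * y ^ n)‖ ≤ C * R * ((n + 1) * (r * R) ^ n) := by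
    intro n y hy
    rw [mem_ball_zero_iff] at hy
    calc ‖a (n + 1) * ((n + 1 : ℕ) * y ^ n)‖ = ‖a (n + 1)‖ * ((n + 1) * ‖y‖ ^ n) := by
          rw [norm_mul, norm_mul, norm_pow, RCLike.norm_natCast]; push_cast; ring
      _ ≤ C * R ^ (n + 1) * ((n + 1) * r ^ n) := by gcongr; exact ha _
      _ = C * R * ((n + 1) * (r * R) ^ n) := by ring
  have htail := hasDerivAt_tsum_of_isPreconnected hu isOpen_ball
    (convex_ball (0 : 𝕜) r).isPreconnected
    (fun n y _ => (hasDerivAt_pow (n + 1) y).const_mul (a (n + 1))) hbound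
    (mem_ball_self hr) (by simp) (mem_ball_zero_iff.2 htr)
  have hsplit : ∀ z ∈ ball (0 : 𝕜) r,
      ∑' k, a k * z ^ k = a 0 + ∑' n, a (n + 1) * z ^ (n + 1) := fun z hz => by
    rw [(summable_norm_mul_pow_of_norm_le_geometric hR ha
      ((mem_ball_zero_iff.1 hz).trans hrR)).of_norm.tsum_eq_zero_add]
    simp
  have hnear : (fun z => ∑' k, a k * z ^ k) =ᶠ[nhds t]
      fun z => a 0 + ∑' n, a (n + 1) * z ^ (n + 1) :=
    Filter.eventually_of_mem (isOpen_ball.mem_nhds (mem_ball_zero_iff.2 htr)) hsplit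
  refine ((htail.const_add (a 0)).congr_of_eventuallyEq hnear).congr_deriv ?_
  exact tsum_congr fun n => by push_cast; ring

theorem tsum_mul_zero_pow (a : ℕ → 𝕜) : ∑' k, a k * 0 ^ k = a 0 := by
  rw [tsum_eq_single 0 fun k hk => by simp [hk]]
  simp

end PowerSeries

noncomputable def painleveCoeff (b : ℂ) : ℕ → ℂ
  | 0 => 0
  | 1 => b
  | k + 2 => (6 * ∑ i : Fin (k + 1), painleveCoeff b i * painleveCoeff b (k - i)
      + if k = 1 then 1 else 0) / ((k + 1) * (k + 2))

section Coefficients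

variable (b : ℂ)

@[simp] theorem painleveCoeff_zero : painleveCoeff b 0 = 0 := by rw [painleveCoeff]

@[simp] theorem painleveCoeff_one : painleveCoeff b 1 = b := by rw [painleveCoeff]

theorem painleveCoeff_add_two (k : ℕ) :
    ((k : ℂ) + 1) * ((k : ℂ) + 2) * painleveCoeff b (k + 2) =
      6 * ∑ p ∈ antidiagonal k, painleveCoeff b p.1 * painleveCoeff b p.2 +
        if k = 1 then 1 else 0 := by
  rw [painleveCoeff,
    Fin.sum_univ_eq_sum_range (fun i => painleveCoeff b i * painleveCoeff b (k - i)),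
    Nat.sum_antidiagonal_eq_sum_range_succ_mk, mul_div_cancel₀]
  norm_cast

-- `3 ≤ A` is what makes `6 (k+1) Aᵏ + 1 ≤ (k+1)(k+2) Aᵏ⁺²` in the inductive step.
theorem norm_painleveCoeff_le (k : ℕ) : ‖painleveCoeff b k‖ ≤ max ‖b‖ 3 ^ k := by
  set A := max ‖b‖ 3
  have hA : 3 ≤ A := le_max_right _ _
  induction k using Nat.strong_induction_on with
  | _ k ih =>
    match k with
    | 0 => simp
    | 1 => simp [A]
    | k + 2 =>
      have hconv : ‖∑ p ∈ antidiagonal k, painleveCoeff b p.1 * painleveCoeff b p.2‖ ≤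
          (k + 1) * A ^ k := by
        calc _ ≤ ∑ _p ∈ antidiagonal k, A ^ k := by
              refine norm_sum_le_of_le _ fun p hp => ?_
              rw [Finset.HasAntidiagonal.mem_antidiagonal] at hp
              rw [norm_mul, ← hp, pow_add]
              gcongr <;> exact ih _ (by omega)
          _ = (k + 1) * A ^ k := by simp
      have hrec :
          (k + 1) * (k + 2) * ‖painleveCoeff b (k + 2)‖ ≤ 6 * ((k + 1) * A ^ k) + 1 := by
        have h := congrArg norm (painleveCoeff_add_two b k)
        rw [norm_mul, show ((k : ℂ) + 1) * ((k : ℂ) + 2) = ((k + 1) * (k + 2) : ℕ) by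
          push_cast; ring, Complex.norm_natCast] at h
        push_cast at h
        rw [h]
        refine (norm_add_le _ _).trans (add_le_add ?_ ?_)
        · rw [norm_mul, RCLike.norm_ofNat]
          exact mul_le_mul_of_nonneg_left hconv (by norm_num)
        · split_ifs <;> simp
      have hAk : 1 ≤ A ^ k := one_le_pow₀ (by linarith)
      have hpos : (0 : ℝ) < (k + 1) * (k + 2) := by positivity
      refine le_of_mul_le_mul_left (hrec.trans ?_) hpos
      have hA2 : 9 ≤ A ^ 2 := by nlinarith
      have hk : (0 : ℝ) ≤ k := k.cast_nonneg
      rw [pow_add]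
      have hAk0 : 0 ≤ A ^ k := by positivity
      nlinarith [mul_le_mul_of_nonneg_left hA2 (mul_nonneg hpos.le hAk0),
        mul_nonneg (mul_nonneg hk hk) hAk0, mul_nonneg hk hAk0]

end Coefficients

noncomputable def painleveSol (b t : ℂ) : ℂ := ∑' k, painleveCoeff b k * t ^ k

noncomputable def painleveSolDeriv (b t : ℂ) : ℂ :=
  ∑' k, (k + 1) * painleveCoeff b (k + 1) * t ^ k

section Solution

variable {b t : ℂ}

@[simp] theorem painleveSol_zero (b : ℂ) : painleveSol b 0 = 0 := by
  simp [painleveSol, tsum_mul_zero_pow]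

@[simp] theorem painleveSolDeriv_zero (b : ℂ) : painleveSolDeriv b 0 = b := by
  simp [painleveSolDeriv, tsum_mul_zero_pow]

theorem norm_succ_mul_painleveCoeff_succ_le (b : ℂ) (k : ℕ) :
    ‖((k : ℂ) + 1) * painleveCoeff b (k + 1)‖ ≤
      max ‖b‖ 3 * (2 * max ‖b‖ 3) ^ k := by
  have hk : (k : ℝ) + 1 ≤ 2 ^ k := by exact_mod_cast Nat.lt_two_pow_self
  rw [norm_mul, show (k : ℂ) + 1 = ((k + 1 : ℕ) : ℂ) by push_cast; ring,
    Complex.norm_natCast]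
  calc ((k + 1 : ℕ) : ℝ) * ‖painleveCoeff b (k + 1)‖
        ≤ 2 ^ k * max ‖b‖ 3 ^ (k + 1) := by
        push_cast; gcongr; exact norm_painleveCoeff_le b _
    _ = max ‖b‖ 3 * (2 * max ‖b‖ 3) ^ k := by ring

theorem hasDerivAt_painleveSol (ht : ‖t‖ < (max ‖b‖ 3)⁻¹) :
    HasDerivAt (painleveSol b) (painleveSolDeriv b t) t :=
  hasDerivAt_tsum_mul_pow (C := 1) (by positivity)
    (fun k => by simpa using norm_painleveCoeff_le b k) ht

theorem tsum_painleveCoeff_second_deriv (ht : ‖t‖ < (max ‖b‖ 3)⁻¹) :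
    ∑' k : ℕ, ((k : ℂ) + 1) * ((k : ℂ) + 2) * painleveCoeff b (k + 2) * t ^ k =
      6 * painleveSol b t ^ 2 + t := by
  have hc := summable_norm_mul_pow_of_norm_le_geometric (C := 1) (by positivity)
    (fun k => by simpa using norm_painleveCoeff_le b k) ht
  have hsq : HasSum (fun k => ∑ p ∈ antidiagonal k,
      painleveCoeff b p.1 * t ^ p.1 * (painleveCoeff b p.2 * t ^ p.2))
      (painleveSol b t ^ 2) := by
    rw [sq, painleveSol, tsum_mul_tsum_eq_tsum_sum_antidiagonal_of_summable_norm hc hc]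
    exact (summable_norm_sum_mul_antidiagonal_of_summable_norm hc hc).of_norm.hasSum
  rw [← ((hsq.mul_left 6).add (hasSum_ite_eq 1 t)).tsum_eq]
  refine tsum_congr fun k => ?_
  rw [painleveCoeff_add_two, add_mul, mul_assoc, sum_mul]
  congr 1
  · congr 1
    refine sum_congr rfl fun p hp => ?_
    rw [Finset.HasAntidiagonal.mem_antidiagonal] at hp
    rw [← hp, pow_add]
    ring
  · split_ifs with h <;> simp [h]

theorem hasDerivAt_painleveSolDeriv (ht : ‖t‖ < (2 * max ‖b‖ 3)⁻¹) :
    HasDerivAt (painleveSolDeriv b) (6 * painleveSol b t ^ 2 + t) t := by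
  have h := hasDerivAt_tsum_mul_pow (by positivity) (norm_succ_mul_painleveCoeff_succ_le b) ht
  rw [← tsum_painleveCoeff_second_deriv
    (ht.trans_le (inv_anti₀ (by positivity) (by linarith [le_max_right ‖b‖ 3])))]
  refine h.congr_deriv (tsum_congr fun k => ?_)
  push_cast
  ring

end Solution

theorem exists_pow_add_sum_mul_pow_ne_zero {R : Type*} [CommRing R] [IsDomain R]
    [Infinite R] {n : ℕ} (q : Fin n → R) :
    ∃ x : R, x ^ n + ∑ i : Fin n, q i * x ^ (n - 1 - (i : ℕ)) ≠ 0 := by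
  open Polynomial in
  by_contra! h
  set P : R[X] := X ^ n + ∑ i : Fin n, C (q i) * X ^ (n - 1 - (i : ℕ))
  have hP : P = 0 := Polynomial.funext fun x => by simpa [P, eval_finsetSum] using h x
  have hcoeff : P.coeff n = 1 := by
    simp only [P, coeff_add, coeff_X_pow_self, finsetSum_coeff, coeff_C_mul, coeff_X_pow]
    rw [sum_eq_zero fun i _ => by rw [if_neg (by omega), mul_zero], add_zero]
  simp [hP] at hcoeff

/-- The first Painlevé equation w'' = 6w² + t has no polynomial first
integral: no relation (w')ⁿ + Q₁(t,w)(w')ⁿ⁻¹ + ⋯ + Qₙ(t,w) = 0 holds for all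
of its solutions. Variables of the two-variable polynomials: X 0 ↦ t, X 1 ↦ w. -/
theorem stmt9 :
    ¬ ∃ (n : ℕ) (_ : 1 ≤ n) (Q : Fin n → MvPolynomial (Fin 2) ℂ),
      ∀ (U : Set ℂ), IsOpen U → IsPreconnected U → U.Nonempty →
        ∀ w dw : ℂ → ℂ,
          (∀ t ∈ U, HasDerivAt w (dw t) t) →
          (∀ t ∈ U, HasDerivAt dw (6 * (w t) ^ 2 + t) t) →
          ∀ t ∈ U,
            (dw t) ^ n +
              ∑ i : Fin n,
                MvPolynomial.eval ![t, w t] (Q i) * (dw t) ^ (n - 1 - (i : ℕ))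
            = 0 := by
  rintro ⟨n, -, Q, hQ⟩
  obtain ⟨b, hb⟩ :=
    exists_pow_add_sum_mul_pow_ne_zero fun i => MvPolynomial.eval ![0, 0] (Q i)
  set ρ := (2 * max ‖b‖ 3)⁻¹
  have hρ : 0 < ρ := by positivity
  have hw : ∀ t ∈ ball (0 : ℂ) ρ, HasDerivAt (painleveSol b) (painleveSolDeriv b t) t :=
    fun t ht => hasDerivAt_painleveSol ((mem_ball_zero_iff.1 ht).trans_le
      (inv_anti₀ (by positivity) (by linarith [le_max_right ‖b‖ 3])))
  have hdw : ∀ t ∈ ball (0 : ℂ) ρ,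
      HasDerivAt (painleveSolDeriv b) (6 * painleveSol b t ^ 2 + t) t :=
    fun t ht => hasDerivAt_painleveSolDeriv (mem_ball_zero_iff.1 ht)
  have h := hQ (ball 0 ρ) isOpen_ball (convex_ball 0 ρ).isPreconnected ⟨0, mem_ball_self hρ⟩
    (painleveSol b) (painleveSolDeriv b) hw hdw 0 (mem_ball_self hρ)
  exact hb (by simpa using h)
end

section
/- If w is a meromorphic solution of w'' = 6w² + t with a pole at t₀, then the pole is a double pole and the Laurent expansion begins w(t) = (t−t₀)⁻² + O((t−t₀)²); moreover the coefficient of (t−t₀)⁻¹ and the constant term both vanish, and the coefficient of (t−t₀)² equals −t₀/10. -/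
/-!
Near a pole of order `M`, `g z = z ^ M * w (t₀ + z)` is the sum of a convergent power series
with `g 0 ≠ 0`. Substituting `w = g / z ^ M` into `w'' = 6 w² + t` and clearing denominators gives
the identity `z^M (z² g'' - 2M z g' + M(M+1) g) = 6 z² g² + (t₀ + z) z^(2M+2)`, first on a punctured
disc and then, by continuity, near `0`. The Taylor coefficient of order `n` on the left is
`(n - 2M)(n - 2M - 1) g_(n-M)`. For `M = 1` the coefficient of `z` gives `g 0 = 0`, for `M ≥ 3` the
coefficient of `z²` gives `6 (g 0)² = 0`; so `M = 2`, and the coefficients of `z², …, z⁶` then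
give `g_0 = 1`, `g_1 = g_2 = g_3 = 0`, `g_4 = -t₀/10`.
-/

open Topology Finset Nat

section TaylorCoeff

variable {𝕜 : Type*} [NontriviallyNormedField 𝕜] {f g : 𝕜 → 𝕜} {x : 𝕜}

noncomputable def taylorCoeff (f : 𝕜 → 𝕜) (x : 𝕜) (n : ℕ) : 𝕜 := iteratedDeriv n f x / n !

lemma Filter.EventuallyEq.taylorCoeff_eq (h : f =ᶠ[𝓝 x] g) (n : ℕ) :
    taylorCoeff f x n = taylorCoeff g x n := by
  rw [taylorCoeff, taylorCoeff, h.iteratedDeriv_eq]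

@[simp]
lemma taylorCoeff_add [CompleteSpace 𝕜] (hf : AnalyticAt 𝕜 f x) (hg : AnalyticAt 𝕜 g x) (n : ℕ) :
    taylorCoeff (fun y => f y + g y) x n = taylorCoeff f x n + taylorCoeff g x n := by
  simp only [taylorCoeff, iteratedDeriv_fun_add hf.contDiffAt hg.contDiffAt, add_div]

@[simp]
lemma taylorCoeff_sub [CompleteSpace 𝕜] (hf : AnalyticAt 𝕜 f x) (hg : AnalyticAt 𝕜 g x) (n : ℕ) :
    taylorCoeff (fun y => f y - g y) x n = taylorCoeff f x n - taylorCoeff g x n := by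
  simp only [taylorCoeff, iteratedDeriv_fun_sub hf.contDiffAt hg.contDiffAt, sub_div]

@[simp]
lemma taylorCoeff_const_mul (c : 𝕜) (f : 𝕜 → 𝕜) (n : ℕ) :
    taylorCoeff (fun y => c * f y) x n = c * taylorCoeff f x n := by
  simp only [taylorCoeff, iteratedDeriv_const_mul_field, mul_div_assoc]

@[simp]
lemma taylorCoeff_deriv [CharZero 𝕜] (f : 𝕜 → 𝕜) (n : ℕ) :
    taylorCoeff (deriv f) x n = (n + 1) * taylorCoeff f x (n + 1) := by
  simp only [taylorCoeff, ← iteratedDeriv_succ', factorial_succ]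
  push_cast
  field_simp

@[simp]
lemma taylorCoeff_mul [CompleteSpace 𝕜] [CharZero 𝕜] (hf : AnalyticAt 𝕜 f x)
    (hg : AnalyticAt 𝕜 g x) (n : ℕ) :
    taylorCoeff (fun y => f y * g y) x n =
      ∑ i ∈ range (n + 1), taylorCoeff f x i * taylorCoeff g x (n - i) := by
  simp only [taylorCoeff, iteratedDeriv_fun_mul hf.contDiffAt hg.contDiffAt, sum_div]
  refine sum_congr rfl fun i hi => ?_
  have hin : i ≤ n := Nat.lt_succ_iff.mp (mem_range.mp hi)
  rw [Nat.cast_choose 𝕜 hin]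
  have := Nat.cast_ne_zero (R := 𝕜) |>.mpr (factorial_ne_zero n)
  field_simp

@[simp]
lemma taylorCoeff_pow [CharZero 𝕜] (k n : ℕ) :
    taylorCoeff (fun y : 𝕜 => y ^ k) 0 n = if n = k then 1 else 0 := by
  rw [taylorCoeff, iteratedDeriv_fun_pow_zero]
  split_ifs with h
  · subst h; exact div_self (Nat.cast_ne_zero.mpr (factorial_ne_zero n))
  · simp

@[simp]
lemma taylorCoeff_id [CharZero 𝕜] (n : ℕ) :
    taylorCoeff (fun y : 𝕜 => y) 0 n = if n = 1 then 1 else 0 := by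
  simpa using taylorCoeff_pow (𝕜 := 𝕜) 1 n

lemma HasFPowerSeriesAt.taylorCoeff_eq [CompleteSpace 𝕜] [CharZero 𝕜] {a : ℕ → 𝕜}
    (h : HasFPowerSeriesAt f (FormalMultilinearSeries.ofScalars 𝕜 a) x) (n : ℕ) :
    taylorCoeff f x n = a n :=
  congrFun (FormalMultilinearSeries.ofScalars_series_injective 𝕜 𝕜
    (h.analyticAt.hasFPowerSeriesAt.eq_formalMultilinearSeries h)) n

end TaylorCoeff

section DerivDivPow

variable {𝕜 : Type*} [NontriviallyNormedField 𝕜] {U : Set 𝕜} {g h W dW : 𝕜 → 𝕜} {y h' : 𝕜}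

lemma HasDerivAt.div_id_pow (hh : HasDerivAt h h' y) (hy : y ≠ 0) (M : ℕ) :
    HasDerivAt (fun y => h y / y ^ M) ((y * h' - M * h y) / y ^ (M + 1)) y := by
  refine (hh.div (hasDerivAt_pow M y) (pow_ne_zero M hy)).congr_deriv ?_
  rcases M with _ | m
  · simp [hy]
  · rw [Nat.add_sub_cancel]
    field_simp
    ring

lemma eqOn_deriv_of_eqOn_div_pow (hU : IsOpen U) (h0 : (0 : 𝕜) ∉ U) (hg : DifferentiableOn 𝕜 g U)
    (M : ℕ) (hgW : Set.EqOn W (fun y => g y / y ^ M) U) (hW : ∀ y ∈ U, HasDerivAt W (dW y) y) :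
    Set.EqOn dW (fun y => (y * deriv g y - M * g y) / y ^ (M + 1)) U := fun y hy => by
  have hy0 : y ≠ 0 := fun h => h0 (h ▸ hy)
  have hg_at := (hg.differentiableAt (hU.mem_nhds hy)).hasDerivAt
  refine (hW y hy).unique ((hg_at.div_id_pow hy0 M).congr_of_eventuallyEq ?_)
  filter_upwards [hU.mem_nhds hy] with z hz using hgW hz

lemma hasDerivAt_deriv_of_eqOn_div_pow (hU : IsOpen U) (h0 : (0 : 𝕜) ∉ U)
    (hg : DifferentiableOn 𝕜 g U) (hg' : DifferentiableOn 𝕜 (deriv g) U) (M : ℕ)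
    (hgW : Set.EqOn W (fun y => g y / y ^ M) U) (hW : ∀ y ∈ U, HasDerivAt W (dW y) y)
    (hy : y ∈ U) :
    HasDerivAt dW ((y ^ 2 * deriv (deriv g) y - 2 * M * y * deriv g y + M * (M + 1) * g y) /
      y ^ (M + 2)) y := by
  have hy0 : y ≠ 0 := fun h => h0 (h ▸ hy)
  have hnum : HasDerivAt (fun y => y * deriv g y - M * g y)
      (y * deriv (deriv g) y + deriv g y - M * deriv g y) y := by
    have h1 := (hg'.differentiableAt (hU.mem_nhds hy)).hasDerivAt
    have h2 := (hg.differentiableAt (hU.mem_nhds hy)).hasDerivAt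
    refine (((hasDerivAt_id y).mul h1).sub (h2.const_mul (M : 𝕜))).congr_deriv ?_
    simp only [id, one_mul]; ring
  convert! (hnum.div_id_pow hy0 (M + 1)).congr_of_eventuallyEq ?_ using 1
  · field_simp
    push_cast
    ring
  · filter_upwards [hU.mem_nhds hy] with z hz using eqOn_deriv_of_eqOn_div_pow hU h0 hg M hgW hW hz

end DerivDivPow

section Laurent

lemma HasSum.pow_mul_of_laurent {𝕜 : Type*} [Field 𝕜] [TopologicalSpace 𝕜]
    [IsTopologicalRing 𝕜] {c : ℤ → 𝕜} {M : ℕ} (hc : ∀ n < -(M : ℤ), c n = 0) {z S : 𝕜}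
    (hz : z ≠ 0) (h : HasSum (fun n : ℤ => c n * z ^ n) S) :
    HasSum (fun k : ℕ => c (k - M) * z ^ k) (z ^ M * S) := by
  have hinj : Function.Injective (fun k : ℕ => (k : ℤ) - M) := fun a b hab => by
    simpa using hab
  have hout : ∀ n ∉ Set.range (fun k : ℕ => (k : ℤ) - M), z ^ M * (c n * z ^ n) = 0 := by
    intro n hn
    rw [hc n ?_, zero_mul, mul_zero]
    by_contra! hle
    exact hn ⟨(n + M).toNat, show ((n + M).toNat : ℤ) - M = n by omega⟩
  refine ((hinj.hasSum_iff hout).2 (h.mul_left (z ^ M))).congr_fun fun k => ?_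
  simp only [Function.comp_apply]
  rw [zpow_sub₀ hz, zpow_natCast, zpow_natCast]
  field_simp

lemma FormalMultilinearSeries.le_radius_ofScalars {𝕜 : Type*} [NontriviallyNormedField 𝕜]
    {a : ℕ → 𝕜} {z : 𝕜} (h : Summable fun n => a n * z ^ n) :
    (‖z‖₊ : ENNReal) ≤ (ofScalars 𝕜 a).radius := by
  refine (ofScalars 𝕜 a).le_radius_of_tendsto (l := 0) ?_
  simpa [ofScalars_norm] using h.tendsto_atTop_zero.norm

theorem exists_hasFPowerSeriesOnBall_of_hasSum_laurent {c : ℤ → ℂ} {M : ℕ}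
    (hc : ∀ n < -(M : ℤ), c n = 0) {r : ℝ} (hr : 0 < r) {f : ℂ → ℂ}
    (hf : ∀ z ∈ Metric.ball 0 r \ {0}, HasSum (fun n : ℤ => c n * z ^ n) (f z)) :
    ∃ g, HasFPowerSeriesOnBall g
        (FormalMultilinearSeries.ofScalars ℂ fun k : ℕ => c (k - M)) 0 (ENNReal.ofReal r) ∧
      ∀ z ∈ Metric.ball 0 r \ {0}, g z = z ^ M * f z := by
  set P := FormalMultilinearSeries.ofScalars ℂ fun k : ℕ => c (k - M)
  have hshift : ∀ z ∈ Metric.ball 0 r \ {0},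
      HasSum (fun k : ℕ => c (k - M) * z ^ k) (z ^ M * f z) := fun z hz =>
    (hf z hz).pow_mul_of_laurent hc hz.2
  have hrad : ENNReal.ofReal r ≤ P.radius := by
    refine ENNReal.le_of_forall_pos_nnreal_lt fun ρ hρ hρr => ?_
    have hz : (ρ : ℂ) ∈ Metric.ball 0 r \ {0} := by
      refine ⟨?_, by simpa using hρ.ne'⟩
      simpa [ENNReal.coe_lt_ofReal] using hρr
    simpa using FormalMultilinearSeries.le_radius_ofScalars (hshift _ hz).summable
  have hP := (P.hasFPowerSeriesOnBall ((ENNReal.ofReal_pos.2 hr).trans_le hrad)).mono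
    (ENNReal.ofReal_pos.2 hr) hrad
  refine ⟨P.sum, hP, fun z hz => ?_⟩
  have hsum := hP.hasSum (y := z) (by simpa [Metric.mem_ball] using hz.1)
  simp only [zero_add, P, FormalMultilinearSeries.ofScalars_apply_eq, smul_eq_mul] at hsum
  exact hsum.unique (hshift z hz)

end Laurent

section PainleveI

def PainleveIPoleEq (t₀ : ℂ) (M : ℕ) (g : ℂ → ℂ) : Prop :=
  (fun y => y ^ M * (y ^ 2 * deriv (deriv g) y - 2 * M * (y * deriv g y) + M * (M + 1) * g y))
    =ᶠ[𝓝 0] fun y => 6 * (y ^ 2 * (g y * g y)) + t₀ * y ^ (2 * M + 2) + y ^ (2 * M + 3)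

variable {t₀ : ℂ} {M : ℕ} {g : ℂ → ℂ}

theorem painleveIPoleEq_of_eqOn {r : ℝ} (hr : 0 < r) {W dW : ℂ → ℂ}
    (hg : AnalyticOnNhd ℂ g (Metric.ball 0 r))
    (hgW : ∀ y ∈ Metric.ball 0 r \ {0}, g y = y ^ M * W y)
    (hW : ∀ y ∈ Metric.ball 0 r \ {0}, HasDerivAt W (dW y) y)
    (hdW : ∀ y ∈ Metric.ball 0 r \ {0}, HasDerivAt dW (6 * W y ^ 2 + (t₀ + y)) y) :
    PainleveIPoleEq t₀ M g := by
  set U := Metric.ball (0 : ℂ) r \ {0}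
  have hU : IsOpen U := Metric.isOpen_ball.sdiff isClosed_singleton
  have h0 : (0 : ℂ) ∉ U := fun h => h.2 rfl
  have hgU : DifferentiableOn ℂ g U := hg.differentiableOn.mono Set.sdiff_subset
  have hg'U : DifferentiableOn ℂ (deriv g) U := hg.deriv.differentiableOn.mono Set.sdiff_subset
  have hWg : Set.EqOn W (fun y => g y / y ^ M) U := fun y hy => by
    simp only [hgW y hy, mul_div_cancel_left₀ _ (pow_ne_zero M hy.2)]
  have hEq : ∀ y ∈ U, y ^ M * (y ^ 2 * deriv (deriv g) y - 2 * M * (y * deriv g y) +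
      M * (M + 1) * g y) =
        6 * (y ^ 2 * (g y * g y)) + t₀ * y ^ (2 * M + 2) + y ^ (2 * M + 3) := by
    intro y hy
    have hode := (hdW y hy).unique (hasDerivAt_deriv_of_eqOn_div_pow hU h0 hgU hg'U M hWg hW hy)
    rw [hWg hy] at hode
    have hy0 : y ≠ 0 := hy.2
    field_simp at hode
    refine mul_left_cancel₀ (pow_ne_zero M hy0) ?_
    linear_combination -hode
  have hlhs : ContinuousAt (fun y => y ^ M * (y ^ 2 * deriv (deriv g) y -
      2 * M * (y * deriv g y) + M * (M + 1) * g y)) 0 := by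
    have := hg 0 (Metric.mem_ball_self hr)
    fun_prop
  have hrhs : ContinuousAt (fun y => 6 * (y ^ 2 * (g y * g y)) + t₀ * y ^ (2 * M + 2) +
      y ^ (2 * M + 3)) 0 := by
    have := hg 0 (Metric.mem_ball_self hr)
    fun_prop
  refine (hlhs.eventuallyEq_nhds_iff_eventuallyEq_nhdsNE hrhs).1 ?_
  filter_upwards [sdiff_mem_nhdsWithin_compl (Metric.ball_mem_nhds 0 hr) {0}] using hEq

theorem PainleveIPoleEq.order_eq_two (h : PainleveIPoleEq t₀ M g) (hg : AnalyticAt ℂ g 0)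
    (hM : 0 < M) (h0 : taylorCoeff g 0 0 ≠ 0) : M = 2 := by
  obtain rfl | rfl | hM3 : M = 1 ∨ M = 2 ∨ 3 ≤ M := by omega
  · have e1 := h.taylorCoeff_eq 1
    simp (disch := with_unfolding_all fun_prop) [sum_range_succ] at e1
    exact absurd e1 h0
  · rfl
  · have e2 := h.taylorCoeff_eq 2
    simp (disch := with_unfolding_all fun_prop) [sum_range_succ] at e2
    rw [if_neg (by omega), if_neg (by omega)] at e2
    exact absurd (by simpa using e2.symm) h0

theorem PainleveIPoleEq.taylorCoeff_of_order_two (h : PainleveIPoleEq t₀ 2 g)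
    (hg : AnalyticAt ℂ g 0) (h0 : taylorCoeff g 0 0 ≠ 0) :
    taylorCoeff g 0 0 = 1 ∧ taylorCoeff g 0 1 = 0 ∧ taylorCoeff g 0 2 = 0 ∧
      taylorCoeff g 0 3 = 0 ∧ taylorCoeff g 0 4 = -t₀ / 10 := by
  have e2 := h.taylorCoeff_eq 2
  have e3 := h.taylorCoeff_eq 3
  have e4 := h.taylorCoeff_eq 4
  have e5 := h.taylorCoeff_eq 5
  have e6 := h.taylorCoeff_eq 6
  simp (disch := with_unfolding_all fun_prop) [sum_range_succ] at e2 e3 e4 e5 e6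
  norm_num at e2 e3 e4 e5 e6
  have h0' : taylorCoeff g 0 0 = 1 :=
    mul_left_cancel₀ h0 (by linear_combination -e2 :
      taylorCoeff g 0 0 * taylorCoeff g 0 0 = taylorCoeff g 0 0 * 1)
  rw [h0'] at e3 e4 e5 e6
  have h1 : taylorCoeff g 0 1 = 0 := by linear_combination -e3 / 10
  rw [h1] at e4 e5 e6
  have h2 : taylorCoeff g 0 2 = 0 := by linear_combination -e4 / 12
  rw [h2] at e5 e6
  have h3 : taylorCoeff g 0 3 = 0 := by linear_combination -e5 / 12
  rw [h3] at e6
  exact ⟨h0', h1, h2, h3, by linear_combination -e6 / 10⟩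

end PainleveI

/-- Movable double poles of Painlevé I: if a solution of w'' = 6w² + t on a
punctured disc around t₀ is given there by a convergent Laurent series with a
pole at t₀ (of order N ≥ 1), then N = 2 and the expansion begins
w(t) = (t−t₀)⁻² + 0·(t−t₀)⁻¹ + 0 + 0·(t−t₀) − (t₀/10)(t−t₀)² + ⋯ . -/
theorem stmt11 (t₀ : ℂ) (r : ℝ) (hr : 0 < r) (w dw : ℂ → ℂ)
    (c : ℤ → ℂ) (N : ℤ) (hN : 0 < N)
    (hlead : c (-N) ≠ 0)
    (hvanish : ∀ n : ℤ, n < -N → c n = 0)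
    (hsum : ∀ t ∈ Metric.ball t₀ r \ {t₀},
      HasSum (fun n : ℤ => c n * (t - t₀) ^ n) (w t))
    (hw : ∀ t ∈ Metric.ball t₀ r \ {t₀}, HasDerivAt w (dw t) t)
    (hdw : ∀ t ∈ Metric.ball t₀ r \ {t₀},
      HasDerivAt dw (6 * (w t) ^ 2 + t) t) :
    N = 2 ∧ c (-2) = 1 ∧ c (-1) = 0 ∧ c 0 = 0 ∧ c 1 = 0 ∧
      c 2 = -t₀ / 10 := by
  lift N to ℕ using hN.le with M
  have hmem : ∀ z ∈ Metric.ball (0 : ℂ) r \ {0}, t₀ + z ∈ Metric.ball t₀ r \ {t₀} :=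
    fun z ⟨hz, hz0⟩ => ⟨by simpa using hz, by simpa using hz0⟩
  obtain ⟨g, hgP, hgw⟩ := exists_hasFPowerSeriesOnBall_of_hasSum_laurent hvanish hr
    fun z hz => by simpa using hsum _ (hmem z hz)
  have hcoeff : ∀ k : ℕ, taylorCoeff g 0 k = c (k - M) := hgP.hasFPowerSeriesAt.taylorCoeff_eq
  have hg : AnalyticAt ℂ g 0 := hgP.analyticAt
  have hP : PainleveIPoleEq t₀ M g :=
    painleveIPoleEq_of_eqOn hr (by simpa using hgP.analyticOnNhd) hgw
      (fun z hz => (hw _ (hmem z hz)).comp_const_add t₀ z)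
      (fun z hz => by simpa [add_assoc] using (hdw _ (hmem z hz)).comp_const_add t₀ z)
  have h0 : taylorCoeff g 0 0 ≠ 0 := by simpa [hcoeff] using hlead
  obtain rfl := hP.order_eq_two hg (by exact_mod_cast hN) h0
  obtain ⟨e0, e1, e2, e3, e4⟩ := hP.taylorCoeff_of_order_two hg h0
  simp only [hcoeff] at e0 e1 e2 e3 e4
  exact ⟨rfl, e0, e1, e2, e3, e4⟩
end

section
/- Let μ be the measure e^{−x⁴/4+tx²}dx on ℝ and let (Φₙ) be the monic orthogonal polynomials for μ, satisfying the three-term recurrence Φₙ(x) = (x − cₙ)Φₙ₋₁(x) − λₙΦₙ₋₂(x) with λₙ = hₙ₋₁/hₙ₋₂ where hₙ = ∫Φₙ²dμ. Then cₙ = 0 for all n, and the recurrence coefficients satisfy λₙ(λₙ₋₁ + λₙ + λₙ₊₁) − 2tλₙ = n − 1 (string equation, a special case of discrete Painlevé I). -/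
open MeasureTheory Polynomial Filter Real Finset

lemma pow_abs_le' (x : ℝ) (i d : ℕ) (hi : i ≤ 2*d) : |x| ^ i ≤ 1 + x ^ (2*d) := by
  have hnn : (0:ℝ) ≤ x ^ (2*d) := by
    rw [pow_mul]; exact pow_nonneg (sq_nonneg x) d
  rcases le_total |x| 1 with hx | hx
  · have : |x| ^ i ≤ 1 := pow_le_one₀ (abs_nonneg x) hx
    linarith
  · have h1 : |x| ^ i ≤ |x| ^ (2*d) := pow_le_pow_right₀ hx hi
    have h2 : |x| ^ (2*d) = x ^ (2*d) := by
      rw [pow_mul, pow_mul, sq_abs]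
    linarith [h1, h2.le]

lemma poly_abs_bound (Q : ℝ[X]) (x : ℝ) :
    |Q.eval x| ≤ (∑ i ∈ Finset.range (Q.natDegree+1), |Q.coeff i|) * (1 + x^(2*Q.natDegree)) := by
  have h1 : Q.eval x = ∑ i ∈ Finset.range (Q.natDegree+1), Q.coeff i * x ^ i :=
    Q.eval_eq_sum_range x
  set d := Q.natDegree
  rw [h1]
  calc |∑ i ∈ Finset.range (d+1), Q.coeff i * x ^ i|
      ≤ ∑ i ∈ Finset.range (d+1), |Q.coeff i * x ^ i| := Finset.abs_sum_le_sum_abs _ _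
    _ ≤ ∑ i ∈ Finset.range (d+1), |Q.coeff i| * (1 + x^(2*d)) := by
        apply Finset.sum_le_sum
        intro i hi
        rw [abs_mul, abs_pow]
        refine mul_le_mul_of_nonneg_left ?_ (abs_nonneg _)
        exact pow_abs_le' x i d (by have := Finset.mem_range.mp hi; omega)
    _ = _ := by rw [← Finset.sum_mul]

lemma gauss_dom (d : ℕ) (x : ℝ) :
    (1 + x^(2*d)) * Real.exp (-x^2) ≤ (1 + 2^d * d.factorial) * Real.exp (-(x^2)/2) := by
  have hx2 : (0:ℝ) ≤ x^2/2 := by positivity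
  have hkey : (x^2/2)^d / d.factorial ≤ Real.exp (x^2/2) := by
    refine le_trans ?_ (Real.sum_le_exp_of_nonneg hx2 (d+1))
    exact Finset.single_le_sum (f := fun i => (x^2/2)^i / i.factorial)
      (fun i _ => by positivity) (Finset.self_mem_range_succ d)
  have hfac : (0:ℝ) < d.factorial := by positivity
  have h1 : x^(2*d) ≤ 2^d * d.factorial * Real.exp (x^2/2) := by
    have he : (2:ℝ)*(x^2/2) = x^2 := by ring
    have hx : x^(2*d) = 2^d * (x^2/2)^d := by
      rw [pow_mul, ← mul_pow, he]
    rw [hx]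
    have := (div_le_iff₀ hfac).mp hkey
    nlinarith [this, pow_nonneg (by norm_num : (0:ℝ) ≤ 2) d]
  have hexp1 : Real.exp (-x^2) ≤ Real.exp (-(x^2)/2) := by
    apply Real.exp_le_exp.mpr; nlinarith [sq_nonneg x]
  have hexp2 : Real.exp (x^2/2) * Real.exp (-x^2) = Real.exp (-(x^2)/2) := by
    rw [← Real.exp_add]; ring_nf
  have hexppos : (0:ℝ) < Real.exp (-x^2) := Real.exp_pos _
  calc (1 + x^(2*d)) * Real.exp (-x^2)
      = Real.exp (-x^2) + x^(2*d) * Real.exp (-x^2) := by ring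
    _ ≤ Real.exp (-(x^2)/2) + (2^d * d.factorial) * Real.exp (-(x^2)/2) := by
        have h3 : x^(2*d) * Real.exp (-x^2)
            ≤ 2^d * d.factorial * (Real.exp (x^2/2) * Real.exp (-x^2)) := by
          nlinarith [h1, hexppos]
        rw [hexp2] at h3
        linarith
    _ = (1 + 2^d * d.factorial) * Real.exp (-(x^2)/2) := by ring

lemma weight_bound (t x : ℝ) :
    Real.exp (-x^4/4 + t*x^2) ≤ Real.exp ((t+1)^2) * Real.exp (-x^2) := by
  rw [← Real.exp_add]
  apply Real.exp_le_exp.mpr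
  nlinarith [sq_nonneg (x^2 - 2*(t+1))]

lemma master_bound (t : ℝ) (Q : ℝ[X]) :
    ∃ K : ℝ, ∀ x : ℝ, |Q.eval x * Real.exp (-x ^ 4 / 4 + t * x ^ 2)| ≤ K * Real.exp (-(x^2)/2) := by
  set d := Q.natDegree
  set S := ∑ i ∈ Finset.range (d+1), |Q.coeff i|
  have hS : 0 ≤ S := Finset.sum_nonneg fun i _ => abs_nonneg _
  refine ⟨S * Real.exp ((t+1)^2) * (1 + 2^d * d.factorial), fun x => ?_⟩
  have hw : (0:ℝ) < Real.exp (-x ^ 4 / 4 + t * x ^ 2) := Real.exp_pos _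
  rw [abs_mul, abs_of_pos hw]
  calc |Q.eval x| * Real.exp (-x ^ 4 / 4 + t * x ^ 2)
      ≤ (S * (1 + x^(2*d))) * (Real.exp ((t+1)^2) * Real.exp (-x^2)) := by
        refine mul_le_mul (poly_abs_bound Q x) (weight_bound t x) hw.le ?_
        have hnn : (0:ℝ) ≤ x ^ (2*d) := by rw [pow_mul]; exact pow_nonneg (sq_nonneg x) d
        positivity
    _ = (S * Real.exp ((t+1)^2)) * ((1 + x^(2*d)) * Real.exp (-x^2)) := by ring
    _ ≤ (S * Real.exp ((t+1)^2)) * ((1 + 2^d * d.factorial) * Real.exp (-(x^2)/2)) :=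
        mul_le_mul_of_nonneg_left (gauss_dom d x) (by positivity)
    _ = _ := by ring

lemma integrable_gauss_half : Integrable (fun x : ℝ => Real.exp (-(x^2)/2)) := by
  have h := integrable_exp_neg_mul_sq (by norm_num : (0:ℝ) < 1/2)
  convert h using 2 with x
  ring_nf

lemma integrable_poly_weight (t : ℝ) (Q : ℝ[X]) :
    Integrable (fun x : ℝ => Q.eval x * Real.exp (-x ^ 4 / 4 + t * x ^ 2)) := by
  obtain ⟨K, hK⟩ := master_bound t Q
  refine Integrable.mono' (integrable_gauss_half.const_mul K) ?_ ?_
  · apply Continuous.aestronglyMeasurable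
    refine Q.continuous.mul (Real.continuous_exp.comp ?_)
    exact ((continuous_pow 4).neg.div_const 4).add (continuous_const.mul (continuous_pow 2))
  · exact Filter.Eventually.of_forall fun x => by
      rw [Real.norm_eq_abs]; exact hK x

lemma tendsto_poly_weight (t : ℝ) (Q : ℝ[X]) (l : Filter ℝ)
    (hl : Tendsto (fun x : ℝ => x^2) l atTop) :
    Tendsto (fun x : ℝ => Q.eval x * Real.exp (-x ^ 4 / 4 + t * x ^ 2)) l (nhds 0) := by
  obtain ⟨K, hK⟩ := master_bound t Q
  have h1 : Tendsto (fun x : ℝ => K * Real.exp (-(x^2)/2)) l (nhds 0) := by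
    have h2 : Tendsto (fun y : ℝ => -y/2) atTop atBot :=
      tendsto_neg_atTop_atBot.atBot_div_const (by norm_num)
    have h3 : Tendsto (fun x : ℝ => Real.exp (-(x^2)/2)) l (nhds 0) := by
      have := Real.tendsto_exp_atBot.comp (h2.comp hl)
      simpa [Function.comp_def] using this
    simpa using h3.const_mul K
  exact squeeze_zero_norm (fun x => by rw [Real.norm_eq_abs]; exact hK x) h1

noncomputable def Gpoly (t : ℝ) : ℝ[X] := C t * X^2 - C (4⁻¹:ℝ) * X^4

lemma Gpoly_eval (t x : ℝ) : (Gpoly t).eval x = -x ^ 4 / 4 + t * x ^ 2 := by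
  simp [Gpoly]; ring

lemma Gpoly_deriv (t : ℝ) : derivative (Gpoly t) = C (2*t) * X - X^3 := by
  have h4 : (C (4⁻¹:ℝ)) * C (4:ℝ) = 1 := by rw [← C_mul]; norm_num
  simp only [Gpoly, derivative_sub, derivative_C_mul, derivative_X_pow]
  push_cast
  ring_nf
  have h14 : (C (1/4:ℝ)) * C (4:ℝ) = 1 := by rw [← C_mul]; norm_num
  have ht2 : (C t) * C (2:ℝ) = C (t*2) := by rw [← C_mul]
  linear_combination (-(X:ℝ[X])^3) * h14 + (X:ℝ[X]) * ht2

lemma ibp_weight (t : ℝ) (Q : ℝ[X]) :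
    ∫ x : ℝ, (derivative Q + Q * derivative (Gpoly t)).eval x
      * Real.exp (-x ^ 4 / 4 + t * x ^ 2) = 0 := by
  have hder : ∀ x : ℝ, HasDerivAt (fun y => Q.eval y * Real.exp (-y ^ 4 / 4 + t * y ^ 2))
      ((derivative Q + Q * derivative (Gpoly t)).eval x * Real.exp (-x ^ 4 / 4 + t * x ^ 2)) x := by
    intro x
    have h1 : HasDerivAt (fun y => Q.eval y * Real.exp ((Gpoly t).eval y))
        (Q.derivative.eval x * Real.exp ((Gpoly t).eval x) +
          Q.eval x * (Real.exp ((Gpoly t).eval x) * (derivative (Gpoly t)).eval x)) x :=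
      (Q.hasDerivAt x).mul ((Polynomial.hasDerivAt (Gpoly t) x).exp)
    have heq : (fun y => Q.eval y * Real.exp (-y ^ 4 / 4 + t * y ^ 2))
        = fun y => Q.eval y * Real.exp ((Gpoly t).eval y) := by
      funext y; rw [Gpoly_eval]
    rw [heq, ← Gpoly_eval t x]
    convert h1 using 1
    rw [eval_add, eval_mul]; ring
  have hbot : Tendsto (fun x : ℝ => Q.eval x * Real.exp (-x ^ 4 / 4 + t * x ^ 2)) atBot (nhds 0) := by
    refine tendsto_poly_weight t Q atBot ?_
    have h1 : Tendsto (fun x : ℝ => -x) atBot atTop := tendsto_neg_atBot_atTop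
    have h2 := (tendsto_pow_atTop (by norm_num : (2:ℕ) ≠ 0)).comp h1
    simpa [Function.comp_def, neg_sq] using h2
  have htop : Tendsto (fun x : ℝ => Q.eval x * Real.exp (-x ^ 4 / 4 + t * x ^ 2)) atTop (nhds 0) :=
    tendsto_poly_weight t Q atTop (tendsto_pow_atTop (by norm_num : (2:ℕ) ≠ 0))
  have h0 := integral_of_hasDerivAt_of_tendsto hder
    (integrable_poly_weight t (derivative Q + Q * derivative (Gpoly t))) hbot htop
  simpa using h0

/-- Shohat's string equation (discrete Painlevé I) for the recurrence
coefficients of the monic orthogonal polynomials for the weight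
e^{−x⁴/4 + t x²} on ℝ: cₙ = 0 and λₙ(λₙ₋₁ + λₙ + λₙ₊₁) − 2tλₙ = n − 1. -/
theorem stmt13 (t : ℝ) (p : ℝ → ℝ)
    (hp : ∀ x, p x = Real.exp (-x ^ 4 / 4 + t * x ^ 2))
    (Φ : ℕ → Polynomial ℝ)
    (hmonic : ∀ n, (Φ n).Monic)
    (hdeg : ∀ n, (Φ n).natDegree = n)
    (horth : ∀ m n, m ≠ n → ∫ x : ℝ, (Φ m).eval x * (Φ n).eval x * p x = 0)
    (h : ℕ → ℝ) (hh : ∀ n, h n = ∫ x : ℝ, ((Φ n).eval x) ^ 2 * p x)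
    (c lam : ℕ → ℝ)
    (hrec : ∀ n, 2 ≤ n →
      Φ n = (X - C (c n)) * Φ (n - 1) - C (lam n) * Φ (n - 2))
    (hlam : ∀ n, 2 ≤ n → lam n = h (n - 1) / h (n - 2)) :
    (∀ n, 2 ≤ n → c n = 0) ∧
    (∀ n : ℕ, 3 ≤ n →
      lam n * (lam (n - 1) + lam n + lam (n + 1)) - 2 * t * lam n
        = (n : ℝ) - 1) := by
  classical
  have ppos : ∀ x, 0 < p x := fun x => by rw [hp]; positivity
  have peven : ∀ x, p (-x) = p x := by
    intro x; rw [hp, hp]; congr 1; ring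
  have IB : ∀ Q : ℝ[X], Integrable (fun x => Q.eval x * p x) := by
    intro Q
    have hQ := integrable_poly_weight t Q
    simpa only [← hp] using hQ
  set J : ℝ[X] → ℝ := fun Q => ∫ x : ℝ, Q.eval x * p x with hJ
  have Jadd : ∀ P Q : ℝ[X], J (P + Q) = J P + J Q := by
    intro P Q
    simp only [hJ, eval_add, add_mul]
    exact integral_add (IB P) (IB Q)
  have Jsmul : ∀ (a : ℝ) (P : ℝ[X]), J (C a * P) = a * J P := by
    intro a P
    simp only [hJ, eval_mul, eval_C, mul_assoc]
    exact integral_const_mul a _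
  have Jsub : ∀ P Q : ℝ[X], J (P - Q) = J P - J Q := by
    intro P Q
    have h1 : P + C (-1) * Q = P - Q := by rw [map_neg, map_one]; ring
    rw [← h1, Jadd, Jsmul]; ring
  have Jorth : ∀ m n, m ≠ n → J (Φ m * Φ n) = 0 := by
    intro m n hmn
    simp only [hJ, eval_mul]
    exact horth m n hmn
  have Jsq : ∀ n, J (Φ n * Φ n) = h n := by
    intro n
    show (∫ x : ℝ, (Φ n * Φ n).eval x * p x) = h n
    rw [hh n]
    congr 1
    funext x
    rw [eval_mul, sq]
  have hctop : ∀ k, (Φ k).coeff k = 1 := fun k => by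
    have hk := (hmonic k).coeff_natDegree
    rwa [hdeg] at hk
  have hczero : ∀ k i, k < i → (Φ k).coeff i = 0 := fun k i hik =>
    coeff_eq_zero_of_natDegree_lt (by rw [hdeg]; exact hik)
  have hΦ0 : Φ 0 = 1 := ((hmonic 0).natDegree_eq_zero).mp (hdeg 0)
  -- orthogonality to all lower degrees
  have Jlowaux : ∀ k, ∀ P : ℝ[X], P.natDegree ≤ k → ∀ n, k < n → J (Φ n * P) = 0 := by
    intro k
    induction k with
    | zero =>
      intro P hP n hn
      have hPC : P = C (P.coeff 0) := eq_C_of_natDegree_le_zero hP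
      have he : Φ n * P = C (P.coeff 0) * (Φ n * Φ 0) := by
        calc Φ n * P = Φ n * C (P.coeff 0) := by conv_lhs => rw [hPC]
          _ = C (P.coeff 0) * (Φ n * Φ 0) := by rw [hΦ0]; ring
      rw [he, Jsmul, Jorth n 0 (by omega), mul_zero]
    | succ k ih =>
      intro P hP n hn
      have hQdeg : (P - C (P.coeff (k+1)) * Φ (k+1)).natDegree ≤ k := by
        apply Polynomial.natDegree_le_iff_coeff_eq_zero.mpr
        intro m hm
        rw [coeff_sub, coeff_C_mul]
        rcases eq_or_lt_of_le (show k+1 ≤ m by omega) with hmk | hmk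
        · rw [← hmk, hctop]; ring
        · rw [coeff_eq_zero_of_natDegree_lt (lt_of_le_of_lt hP hmk),
              hczero (k+1) m hmk]; ring
      have hsplit : Φ n * P
          = Φ n * (P - C (P.coeff (k+1)) * Φ (k+1)) + C (P.coeff (k+1)) * (Φ n * Φ (k+1)) := by
        ring
      rw [hsplit, Jadd, Jsmul, ih _ hQdeg n (by omega), Jorth n (k+1) (by omega),
        mul_zero, add_zero]
  have Jlow : ∀ n (P : ℝ[X]), P.natDegree < n → J (Φ n * P) = 0 := fun n P hP =>
    Jlowaux P.natDegree P le_rfl n hP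
  -- positivity of h and vanishing criterion
  have fullmeas : ∀ D : ℝ[X], D ≠ 0 → volume {x : ℝ | D.eval x ≠ 0} ≠ 0 := by
    intro D hD0 h0
    have hroots : volume {x : ℝ | D.eval x = 0} = 0 :=
      (D.finite_setOf_isRoot hD0).measure_zero _
    have hle : volume (Set.univ : Set ℝ)
        ≤ volume {x : ℝ | D.eval x = 0} + volume {x : ℝ | D.eval x ≠ 0} := by
      refine le_trans (measure_mono ?_) (measure_union_le _ _)
      intro x _
      by_cases hx : D.eval x = 0
      · exact Set.mem_union_left _ hx
      · exact Set.mem_union_right _ hx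
    rw [hroots, h0, Real.volume_univ] at hle
    simp at hle
  have hpos : ∀ n, 0 < h n := by
    intro n
    rw [hh]
    have hnn : ∀ x : ℝ, 0 ≤ ((Φ n).eval x)^2 * p x := fun x =>
      mul_nonneg (sq_nonneg _) (ppos x).le
    have hint : Integrable (fun x => ((Φ n).eval x)^2 * p x) := by
      have := IB (Φ n ^ 2)
      simpa [eval_pow] using this
    rw [integral_pos_iff_support_of_nonneg hnn hint]
    have hsub : {x : ℝ | (Φ n).eval x ≠ 0}
        ⊆ Function.support fun x => ((Φ n).eval x)^2 * p x := by
      intro x hx hcc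
      apply hx
      rcases mul_eq_zero.mp hcc with h1 | h1
      · exact pow_eq_zero_iff (by norm_num) |>.mp h1
      · exact absurd h1 (ppos x).ne'
    refine lt_of_lt_of_le ?_ (measure_mono hsub)
    exact pos_iff_ne_zero.mpr (fullmeas (Φ n) (hmonic n).ne_zero)
  have poly_zero : ∀ D : ℝ[X], J (D * D) = 0 → D = 0 := by
    intro D hJD
    by_contra hD0
    have hnn : ∀ x : ℝ, 0 ≤ (D * D).eval x * p x := fun x => by
      rw [eval_mul]; exact mul_nonneg (mul_self_nonneg _) (ppos x).le
    have hae : (fun x => (D*D).eval x * p x) =ᵐ[volume] 0 :=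
      (integral_eq_zero_iff_of_nonneg hnn (IB _)).mp hJD
    have hae' : ∀ᵐ x : ℝ, (D*D).eval x * p x = 0 := by
      filter_upwards [hae] with x hx using by simpa using hx
    have hm0 : volume {x : ℝ | ¬ ((D*D).eval x * p x = 0)} = 0 := ae_iff.mp hae'
    have hsubset : {x : ℝ | D.eval x ≠ 0} ⊆ {x : ℝ | ¬ ((D*D).eval x * p x = 0)} := by
      intro x hx hcc
      apply hx
      rcases mul_eq_zero.mp hcc with h1 | h1
      · rw [eval_mul] at h1
        rcases mul_eq_zero.mp h1 with h2 | h2 <;> exact h2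
      · exact absurd h1 (ppos x).ne'
    exact fullmeas D hD0 (measure_mono_null hsubset hm0)
  -- parity
  have hparity : ∀ k (x : ℝ), (Φ k).eval (-x) = (-1:ℝ)^k * (Φ k).eval x := by
    intro k
    rcases Nat.eq_zero_or_pos k with hk | hk
    · subst hk; intro x; simp [hΦ0]
    have hkk : ((-1:ℝ))^k * (-1:ℝ)^k = 1 := by rw [← mul_pow]; norm_num
    set Ψ : ℝ[X] := C ((-1:ℝ)^k) * (Φ k).comp (-X) with hΨ
    have hΨeval : ∀ y : ℝ, Ψ.eval y = (-1:ℝ)^k * (Φ k).eval (-y) := by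
      intro y; simp [hΨ, eval_comp]
    have hcompdeg : ((Φ k).comp (-X)).natDegree = k := by
      rw [natDegree_comp, hdeg]; simp
    have hcomplead : ((Φ k).comp (-X)).coeff k = (-1:ℝ)^k := by
      have h1 : ((Φ k).comp (-X)).coeff (((Φ k).comp (-X)).natDegree)
          = ((Φ k).comp (-X)).leadingCoeff := coeff_natDegree
      rw [hcompdeg] at h1
      rw [h1, leadingCoeff_comp (by simp : (-X : ℝ[X]).natDegree ≠ 0)]
      rw [(hmonic k).leadingCoeff]
      simp [hdeg]
    have hΨdeg : Ψ.natDegree ≤ k := le_trans (natDegree_C_mul_le _ _) (le_of_eq hcompdeg)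
    have hDdeg : (Φ k - Ψ).natDegree < k := by
      have hle : (Φ k - Ψ).natDegree ≤ k - 1 := by
        apply Polynomial.natDegree_le_iff_coeff_eq_zero.mpr
        intro m hm
        rw [coeff_sub]
        rcases eq_or_lt_of_le (show k ≤ m by omega) with hkm | hkm
        · rw [← hkm, hctop, hΨ, coeff_C_mul, hcomplead, hkk]; ring
        · rw [hczero k m hkm, coeff_eq_zero_of_natDegree_lt (lt_of_le_of_lt hΨdeg hkm)]; ring
      omega
    have hJ1 : J (Φ k * (Φ k - Ψ)) = 0 := Jlow k _ hDdeg
    have hDevals : ∀ y : ℝ, (Φ k - Ψ).eval y = (Φ k).eval y - (-1:ℝ)^k * (Φ k).eval (-y) := by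
      intro y; rw [eval_sub, hΨeval]
    have hJ2 : J (Ψ * (Φ k - Ψ)) = - J (Φ k * (Φ k - Ψ)) := by
      have hstep : ∀ x : ℝ, (Ψ * (Φ k - Ψ)).eval (-x) * p (-x)
          = -((Φ k * (Φ k - Ψ)).eval x * p x) := by
        intro x
        rw [peven, eval_mul, hΨeval, hDevals, eval_mul, hDevals]
        simp only [neg_neg]
        linear_combination ((-(p x)) * ((Φ k).eval x)^2) * hkk
      calc J (Ψ * (Φ k - Ψ)) = ∫ x : ℝ, (Ψ * (Φ k - Ψ)).eval x * p x := rfl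
        _ = ∫ x : ℝ, (Ψ * (Φ k - Ψ)).eval (-x) * p (-x) :=
            (integral_neg_eq_self (fun x : ℝ => (Ψ * (Φ k - Ψ)).eval x * p x) volume).symm
        _ = ∫ x : ℝ, -((Φ k * (Φ k - Ψ)).eval x * p x) := by
            congr 1; funext x; exact hstep x
        _ = - J (Φ k * (Φ k - Ψ)) := integral_neg _
    have hJDD : J ((Φ k - Ψ) * (Φ k - Ψ)) = 0 := by
      have hdd : (Φ k - Ψ) * (Φ k - Ψ) = Φ k * (Φ k - Ψ) - Ψ * (Φ k - Ψ) := by ring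
      rw [hdd, Jsub, hJ1, hJ2, hJ1]; ring
    have hD0 : Φ k - Ψ = 0 := poly_zero _ hJDD
    have hΦΨ : Φ k = Ψ := by rwa [sub_eq_zero] at hD0
    intro x
    have hx := hΨeval (-x)
    rw [← hΦΨ, neg_neg] at hx
    exact hx
  -- odd moments vanish
  have Jsq2 : ∀ n, J (Φ n ^ 2) = h n := by
    intro n; rw [sq]; exact Jsq n
  have hodd : ∀ k, J (X * Φ k ^ 2) = 0 := by
    intro k
    have he2 : (((-1:ℝ))^k)^2 = 1 := by rw [← pow_mul, mul_comm, pow_mul]; norm_num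
    have hfneg : ∀ x : ℝ, (X * Φ k ^ 2).eval (-x) * p (-x) = -((X * Φ k ^ 2).eval x * p x) := by
      intro x
      rw [peven]
      simp only [eval_mul, eval_pow, eval_X, hparity k]
      linear_combination ((-x) * ((Φ k).eval x)^2 * p x) * he2
    have h1 : J (X * Φ k ^ 2) = ∫ x : ℝ, (X * Φ k ^ 2).eval (-x) * p (-x) :=
      (integral_neg_eq_self (fun x : ℝ => (X * Φ k ^ 2).eval x * p x) volume).symm
    have h2 : (∫ x : ℝ, (X * Φ k ^ 2).eval (-x) * p (-x)) = - J (X * Φ k ^ 2) := by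
      calc (∫ x : ℝ, (X * Φ k ^ 2).eval (-x) * p (-x))
          = ∫ x : ℝ, -((X * Φ k ^ 2).eval x * p x) := by congr 1; funext x; exact hfneg x
        _ = - J (X * Φ k ^ 2) := integral_neg _
    have := h1.trans h2
    linarith
  -- c vanishes
  have hc0 : ∀ n, 2 ≤ n → c n = 0 := by
    intro n hn
    have hJnn : J (Φ n * Φ (n-1)) = 0 := Jorth n (n-1) (by omega)
    have hid : Φ n * Φ (n-1)
        = X * Φ (n-1) ^ 2 - (C (c n) * Φ (n-1) ^ 2 + C (lam n) * (Φ (n-1) * Φ (n-2))) := by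
      rw [hrec n hn]; ring
    rw [hid, Jsub, Jadd, Jsmul, Jsmul, hodd, Jorth (n-1) (n-2) (by omega), Jsq2] at hJnn
    have hpn := hpos (n-1)
    have hcn : c n * h (n-1) = 0 := by linarith
    rcases mul_eq_zero.mp hcn with hE | hE
    · exact hE
    · exact absurd hE hpn.ne'
  -- recurrence in x-multiplied form
  have hX : ∀ k, 2 ≤ k → X * Φ (k-1) = Φ k + C (lam k) * Φ (k-2) := by
    intro k hk
    have h1 := hrec k hk
    rw [hc0 k hk, map_zero, sub_zero] at h1
    linear_combination -h1
  have hlam' : ∀ k, 2 ≤ k → lam k * h (k-2) = h (k-1) := by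
    intro k hk
    rw [hlam k hk, div_mul_cancel₀]
    exact (hpos (k-2)).ne'
  -- integration by parts
  have hIBP : ∀ Q : ℝ[X], J (derivative Q + Q * derivative (Gpoly t)) = 0 := by
    intro Q
    have hw := ibp_weight t Q
    simp only [← hp] at hw
    exact hw
  -- the string equation at shifted index
  have hstring : ∀ m : ℕ, 2 ≤ m →
      lam (m+1) * (lam m + lam (m+1) + lam (m+2)) - 2*t*lam (m+1) = (m:ℝ) := by
    intro m hm
    have r1 : X * Φ m = Φ (m+1) + C (lam (m+1)) * Φ (m-1) := by
      have h1 := hX (m+1) (by omega)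
      rwa [show m+1-1 = m from by omega, show m+1-2 = m-1 from by omega] at h1
    have r2 : X * Φ (m-1) = Φ m + C (lam m) * Φ (m-2) := hX m hm
    have ha : lam (m+1) * h (m-1) = h m := by
      have h1 := hlam' (m+1) (by omega)
      rwa [show m+1-2 = m-1 from by omega, show m+1-1 = m from by omega] at h1
    have hb : lam m * h (m-2) = h (m-1) := hlam' m hm
    have hc2 : lam (m+2) * h m = h (m+1) := by
      have h1 := hlam' (m+2) (by omega)
      rwa [show m+2-2 = m from by omega, show m+2-1 = m+1 from by omega] at h1
    have hdegXz : (X * Φ (m-2)).natDegree < m + 1 := by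
      refine lt_of_le_of_lt (natDegree_mul_le) ?_
      rw [natDegree_X, hdeg]; omega
    have hRdeg : (derivative (Φ m) - C (m:ℝ) * Φ (m-1)).natDegree < m - 1 := by
      have hle : (derivative (Φ m) - C (m:ℝ) * Φ (m-1)).natDegree ≤ m - 2 := by
        apply Polynomial.natDegree_le_iff_coeff_eq_zero.mpr
        intro i hi
        rw [coeff_sub, coeff_C_mul, coeff_derivative]
        rcases eq_or_lt_of_le (show m-1 ≤ i by omega) with him | him
        · rw [← him, show m-1+1 = m from by omega, hctop, hctop,
            Nat.cast_sub (by omega : 1 ≤ m)]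
          push_cast
          ring
        · rw [hczero m (i+1) (by omega), hczero (m-1) i (by omega)]; ring
      omega
    have bigId : X^3 * (Φ m * Φ (m-1)) =
        Φ (m+1) * Φ (m+1)
        + C (lam (m+1)) * (Φ (m+1) * Φ (m-1))
        + C (lam (m+1)) * (Φ (m+1) * Φ (m-1))
        + C (lam (m+1)) * (C (lam (m+1)) * (Φ (m-1) * Φ (m-1)))
        + C (lam m) * (Φ (m+1) * (X * Φ (m-2)))
        + C (lam (m+1)) * (C (lam m) * (Φ m * Φ (m-2)))
        + C (lam (m+1)) * (C (lam m) * (C (lam m) * (Φ (m-2) * Φ (m-2)))) := by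
      linear_combination (X^2 * Φ (m-1) + Φ (m+1) + C (lam (m+1)) * Φ (m-1)) * r1
        + ((Φ (m+1) + C (lam (m+1)) * Φ (m-1)) * X + C (lam (m+1)) * (C (lam m) * Φ (m-2))) * r2
    have smallId : X * (Φ m * Φ (m-1)) = Φ m * Φ m + C (lam m) * (Φ m * Φ (m-2)) := by
      linear_combination (Φ m) * r2
    have derId : derivative (Φ m * Φ (m-1)) =
        C (m:ℝ) * (Φ (m-1) * Φ (m-1))
        + Φ (m-1) * (derivative (Φ m) - C (m:ℝ) * Φ (m-1))
        + Φ m * derivative (Φ (m-1)) := by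
      rw [derivative_mul]; ring
    have E1 : J (derivative (Φ m * Φ (m-1))) = (m:ℝ) * h (m-1) := by
      rw [derId, Jadd, Jadd, Jsmul, Jsq (m-1),
          Jlow (m-1) _ hRdeg,
          Jlow m (derivative (Φ (m-1))) (by
            refine lt_of_le_of_lt (natDegree_derivative_le _) ?_
            rw [hdeg]; omega)]
      ring
    have JX : J (X * (Φ m * Φ (m-1))) = h m := by
      rw [smallId, Jadd, Jsmul, Jsq m, Jorth m (m-2) (by omega), mul_zero, add_zero]
    have JX3 : J (X^3 * (Φ m * Φ (m-1))) =
        h (m+1) + lam (m+1) * (lam (m+1) * h (m-1))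
          + lam (m+1) * (lam m * (lam m * h (m-2))) := by
      rw [bigId, Jadd, Jadd, Jadd, Jadd, Jadd, Jadd, Jsq (m+1)]
      simp only [Jsmul]
      rw [Jorth (m+1) (m-1) (by omega), Jsq (m-1), Jlow (m+1) (X * Φ (m-2)) hdegXz,
          Jorth m (m-2) (by omega), Jsq (m-2)]
      ring
    have prodId : (Φ m * Φ (m-1)) * derivative (Gpoly t) =
        C (2*t) * (X * (Φ m * Φ (m-1))) - X^3 * (Φ m * Φ (m-1)) := by
      rw [Gpoly_deriv]; ring
    have E0 : J (derivative (Φ m * Φ (m-1))) + J ((Φ m * Φ (m-1)) * derivative (Gpoly t)) = 0 := by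
      have hq := hIBP (Φ m * Φ (m-1))
      rwa [Jadd] at hq
    have E2 : J ((Φ m * Φ (m-1)) * derivative (Gpoly t)) =
        2*t*(h m) - (h (m+1) + lam (m+1) * (lam (m+1) * h (m-1))
          + lam (m+1) * (lam m * (lam m * h (m-2)))) := by
      rw [prodId, Jsub, Jsmul, JX, JX3]
    rw [E1, E2] at E0
    have hne := (hpos (m-1)).ne'
    have E' : (lam (m+1) * (lam m + lam (m+1) + lam (m+2)) - 2*t*lam (m+1) - (m:ℝ)) * h (m-1)
        = 0 := by
      linear_combination (-1 : ℝ) * E0 + (lam (m+2) - 2*t) * ha + hc2 - (lam (m+1) * lam m) * hb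
    rcases mul_eq_zero.mp E' with hE | hE
    · linarith
    · exact absurd hE hne
  refine ⟨hc0, ?_⟩
  intro n hn
  have hs := hstring (n-1) (by omega)
  rw [show n-1+1 = n from by omega, show n-1+2 = n+1 from by omega] at hs
  have hcast : ((n-1:ℕ):ℝ) = (n:ℝ) - 1 := by
    rw [Nat.cast_sub (by omega : 1 ≤ n)]; norm_num
  rw [hcast] at hs
  exact hs
end
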